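/- Derivability of the shift-embedding rule: in the symmetric data/codata calculus extended with μ-abstractions and, for each type T, the shift type declarations cbv data type ⇑T { CBV(x :prd T) } and cbn codata type ⇓T { CBN(x :con T) }, the following rule is derivable for every orientation o ∈ {prd, con}, evaluation strategy s ∈ {cbv, cbn}, expression e and type T: if Γ ⊢ e :ᵒ T then Γ ⊢ S^o_s(e) :ᵒ ⇕_s T, where ⇕_cbv T = ⇑T and ⇕_cbn T = ⇓T, and the wrapping function S is defined by S^prd_cbv(e) = CBV(e), S^prd_cbn(e) = match_codata ⇓T { CBN(x) ⇒ e ≫ x }, S^con_cbv(e) = match_data ⇑T { CBV(x) ⇒ x ≫ e }, and S^con_cbn(e) = CBN(e). -/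

import Mathlib

namespace SymCalc

/-! Basic syntactic categories of the symmetric data/codata calculus (CPS fragment). -/

abbrev Var := String
abbrev TName := String
abbrev XName := String

inductive Polarity | dat | cod
deriving DecidableEq, Repr

inductive Orientation | prd | con
deriving DecidableEq, Repr

inductive Strategy | cbv | cbn
deriving DecidableEq, Repr

def Polarity.flip : Polarity → Polarity
  | .dat => .cod | .cod => .dat

def Orientation.flip : Orientation → Orientation
  | .prd => .con | .con => .prd

def Strategy.flip : Strategy → Strategy
  | .cbv => .cbn | .cbn => .cbv

/-- `val p` : the orientation of the canonical xtors of a type of polarity `p`. -/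
def Polarity.val : Polarity → Orientation
  | .dat => .prd | .cod => .con

/-- `cnt p` : the orientation of (co)pattern matches on a type of polarity `p`. -/
def Polarity.cnt : Polarity → Orientation
  | .dat => .con | .cod => .prd

/-- Typing contexts: each variable carries an orientation (producer/consumer) and a type name.
The head of the list is the innermost binding. -/
abbrev Ctx := List (Var × Orientation × TName)

/-- Erase the variable names of a context, keeping orientations and types. -/
def eraseCtx (Γ : Ctx) : List (Orientation × TName) := Γ.map (·.2)

mutual
/-- Expressions `e ::= x | 𝒳σ | match_p T { 𝒳Δ ⇒ c; … } | μ(x :ᵒ T).c`.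
In `mu o x T c` the orientation `o` is the orientation of the μ-abstraction itself
(a producer μ-abstraction `μ(x :prd T).c` abstracts over a consumer variable `x`,
and dually for consumer μ-abstractions). -/
inductive Expr : Type
  | var : Var → Expr
  | xtor : XName → List Expr → Expr
  | mtch : Polarity → TName → List (XName × Ctx × Cmd) → Expr
  | mu : Orientation → Var → TName → Cmd → Expr
/-- Commands `c ::= e₁ ≫ e₂ | Done`. -/
inductive Cmd : Type
  | cut : Expr → Expr → Cmd
  | done : Cmd
end

/-! Substitution. -/

abbrev Env := List (Var × Expr)

/-- Remove the bindings shadowed by the bound variables `xs`. -/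
def shadowV (xs : List Var) (m : Env) : Env :=
  m.filter (fun q => ¬ xs.contains q.1)

mutual
/-- Substitute the (closed) expressions of `m` for free variables in an expression. -/
def substExpr (m : Env) : Expr → Expr
  | .var x => (m.lookup x).getD (.var x)
  | .xtor n σ => .xtor n (σ.attach.map (fun ⟨e, _⟩ => substExpr m e))
  | .mtch p T cases =>
      .mtch p T (cases.attach.map
        (fun ⟨cs, _⟩ => (cs.1, cs.2.1, substCmd (shadowV (cs.2.1.map (·.1)) m) cs.2.2)))
  | .mu o x T c => .mu o x T (substCmd (shadowV [x] m) c)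
termination_by e => sizeOf e
decreasing_by
  · have h := List.sizeOf_lt_of_mem ‹e ∈ σ›
    simp only [Expr.xtor.sizeOf_spec]; omega
  · have h := List.sizeOf_lt_of_mem ‹cs ∈ cases›
    obtain ⟨n', Δ', c'⟩ := cs
    simp only [Expr.mtch.sizeOf_spec, Prod.mk.sizeOf_spec] at h ⊢; omega
  · simp only [Expr.mu.sizeOf_spec]; omega
/-- Substitute the (closed) expressions of `m` for free variables in a command. -/
def substCmd (m : Env) : Cmd → Cmd
  | .cut e₁ e₂ => .cut (substExpr m e₁) (substExpr m e₂)
  | .done => .done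
termination_by c => sizeOf c
decreasing_by
  · simp only [Cmd.cut.sizeOf_spec]; omega
  · simp only [Cmd.cut.sizeOf_spec]; omega
end

/-- Pair the variables of a context with the expressions of a substitution. -/
def bindArgs (Δ : Ctx) (σ : List Expr) : Env := List.zip (Δ.map (·.1)) σ

/-! Programs. -/

/-- A function declaration `𝒳Π := match_p T { 𝒴Δ ⇒ c; … }` (co)pattern matching on
all xtors of the type it belongs to. -/
structure FunDecl where
  name : XName
  args : Ctx
  cases : List (XName × Ctx × Cmd)

/-- A type declaration `s p type T { 𝒳Δ; … } with f₁ … fₙ`. -/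
structure TypeDecl where
  strat : Strategy
  pol : Polarity
  name : TName
  xtors : List (XName × Ctx)
  funs : List FunDecl

/-- A program: a list of type declarations together with a top-level command. -/
structure Program where
  decls : List TypeDecl
  main : Cmd

def Program.findType (P : Program) (T : TName) : Option TypeDecl :=
  P.decls.find? (fun td => td.name = T)

/-- The polarity of the type named `T` in the program, if declared. -/
def polOf? (P : Program) (T : TName) : Option Polarity := (P.findType T).map (·.pol)

/-- The evaluation strategy of the type named `T` in the program, if declared. -/
def stratOf? (P : Program) (T : TName) : Option Strategy := (P.findType T).map (·.strat)

/-- The identity substitution `id_Γ`: the list of the variables bound in `Γ`, in order. -/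
def idSubst (Γ : Ctx) : List Expr := Γ.map (fun g => Expr.var g.1)

/-! Free variables. -/

mutual
/-- `FVE x e`: the variable `x` occurs free in the expression `e`. -/
inductive FVE : Var → Expr → Prop
  | var : ∀ x, FVE x (.var x)
  | xtor : ∀ x n σ e, e ∈ σ → FVE x e → FVE x (.xtor n σ)
  | mtch : ∀ x p T cases cs, cs ∈ cases → FVC x cs.2.2 →
      (∀ v ∈ cs.2.1, v.1 ≠ x) → FVE x (.mtch p T cases)
  | mu : ∀ x o y T c, FVC x c → y ≠ x → FVE x (.mu o y T c)
/-- `FVC x c`: the variable `x` occurs free in the command `c`. -/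
inductive FVC : Var → Cmd → Prop
  | cutl : ∀ x e₁ e₂, FVE x e₁ → FVC x (.cut e₁ e₂)
  | cutr : ∀ x e₁ e₂, FVE x e₂ → FVC x (.cut e₁ e₂)
end


/-! Typing for the calculus extended with μ-abstractions. -/

mutual
/-- Expression typing `Γ ⊢ e :ᵒ T`. -/
inductive HasTy (P : Program) : Ctx → Expr → Orientation → TName → Prop
  | var : ∀ Γ x o T, Γ.lookup x = some (o, T) → HasTy P Γ (.var x) o T
  | xtor : ∀ Γ td X Δ τ, td ∈ P.decls → (X, Δ) ∈ td.xtors →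
      SubstTy P Γ τ Δ → HasTy P Γ (.xtor X τ) td.pol.val td.name
  | fn : ∀ Γ td f τ, td ∈ P.decls → f ∈ td.funs →
      SubstTy P Γ τ f.args → HasTy P Γ (.xtor f.name τ) td.pol.cnt td.name
  | mtch : ∀ Γ td cases, td ∈ P.decls →
      cases.map (fun cs => (cs.1, eraseCtx cs.2.1)) = td.xtors.map (fun g => (g.1, eraseCtx g.2)) →
      (∀ cs ∈ cases, CmdTy P (cs.2.1 ++ Γ) cs.2.2) →
      HasTy P Γ (.mtch td.pol td.name cases) td.pol.cnt td.name
  | mu : ∀ Γ o x T c, CmdTy P ((x, o.flip, T) :: Γ) c →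
      HasTy P Γ (.mu o x T c) o T
/-- Substitution typing `Γ ⊢ σ : Δ`. -/
inductive SubstTy (P : Program) : Ctx → List Expr → Ctx → Prop
  | nil : ∀ Γ, SubstTy P Γ [] []
  | cons : ∀ Γ σ Δ e x o T, SubstTy P Γ σ Δ → HasTy P Γ e o T →
      SubstTy P Γ (e :: σ) ((x, o, T) :: Δ)
/-- Command typing `Γ ⊢ c :cmd`. -/
inductive CmdTy (P : Program) : Ctx → Cmd → Prop
  | cut : ∀ Γ e₁ e₂ T, HasTy P Γ e₁ .prd T → HasTy P Γ e₂ .con T → CmdTy P Γ (.cut e₁ e₂)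
  | done : ∀ Γ, CmdTy P Γ .done
end

/-! Shift types and the shift-embedding `S^o_s`. -/

/-- The declaration `cbv data type ⇑T { CBV(x :prd T) }` of the call-by-value shift of `T`
(with type name `upN`, constructor name `cbvX` and bound variable `x`). -/
def upDecl (T upN : TName) (cbvX : XName) (x : Var) : TypeDecl :=
  ⟨.cbv, .dat, upN, [(cbvX, [(x, .prd, T)])], []⟩

/-- The declaration `cbn codata type ⇓T { CBN(x :con T) }` of the call-by-name shift of `T`
(with type name `downN`, destructor name `cbnX` and bound variable `x`). -/
def downDecl (T downN : TName) (cbnX : XName) (x : Var) : TypeDecl :=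
  ⟨.cbn, .cod, downN, [(cbnX, [(x, .con, T)])], []⟩

/-- `⇕_s T`: the name of the `s`-shift of `T` (`⇕_cbv T = ⇑T`, `⇕_cbn T = ⇓T`). -/
def shiftName (s : Strategy) (upN downN : TName) : TName :=
  match s with | .cbv => upN | .cbn => downN

/-- The wrapping function `S^o_s(e)`:
`S^prd_cbv(e) = CBV(e)`, `S^prd_cbn(e) = match_codata ⇓T { CBN(k) ⇒ e ≫ k }`,
`S^con_cbv(e) = match_data ⇑T { CBV(k) ⇒ k ≫ e }`, `S^con_cbn(e) = CBN(e)`,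
where `k` is a fresh bound variable. -/
def wrapShift (o : Orientation) (s : Strategy) (T upN downN : TName)
    (cbvX cbnX : XName) (k : Var) (e : Expr) : Expr :=
  match o, s with
  | .prd, .cbv => .xtor cbvX [e]
  | .prd, .cbn => .mtch .cod downN [(cbnX, [(k, .con, T)], .cut e (.var k))]
  | .con, .cbv => .mtch .dat upN [(cbvX, [(k, .prd, T)], .cut (.var k) e)]
  | .con, .cbn => .xtor cbnX [e]

/-! Each wrapper is one typing rule away from `e`: `CBV(e)` and `CBN(e)` are typed by T-Xtor,
the two matches by T-Match with the single case body `e ≫ k` (resp. `k ≫ e`). That body lives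
in `Γ` extended by `k`, and since `k` is not free in `e`, this extra binding is harmless: the
typing of an expression only reads the context at its free variables. -/

theorem _root_.List.lookup_append_congr {α β : Type*} [BEq α] [LawfulBEq α]
    {Δ l l' : List (α × β)} {y : α} (h : (∀ v ∈ Δ, v.1 ≠ y) → l.lookup y = l'.lookup y) :
    (Δ ++ l).lookup y = (Δ ++ l').lookup y := by
  rw [List.lookup_append, List.lookup_append]
  by_cases hΔ : ∀ v ∈ Δ, v.1 ≠ y
  · rw [h hΔ]
  · push Not at hΔ
    obtain ⟨v, hv, rfl⟩ := hΔ
    obtain ⟨b, hb⟩ := Option.isSome_iff_exists.mp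
      (List.lookup_isSome_iff.mpr ⟨v, hv, beq_self_eq_true v.1⟩)
    simp [hb]

theorem HasTy.congr_ctx {P : Program} {Γ : Ctx} {e : Expr} {o : Orientation} {T : TName}
    (h : HasTy P Γ e o T) :
    ∀ Γ' : Ctx, (∀ y, FVE y e → Γ.lookup y = Γ'.lookup y) → HasTy P Γ' e o T := by
  induction h using HasTy.rec
    (motive_2 := fun Γ τ Δ _ => ∀ Γ' : Ctx,
      (∀ y, ∀ e ∈ τ, FVE y e → Γ.lookup y = Γ'.lookup y) → SubstTy P Γ' τ Δ)
    (motive_3 := fun Γ c _ => ∀ Γ' : Ctx,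
      (∀ y, FVC y c → Γ.lookup y = Γ'.lookup y) → CmdTy P Γ' c) with
  | var Γ y o T hlk =>
    intro Γ' hΓ
    exact .var _ y o T (hΓ y (.var y) ▸ hlk)
  | xtor Γ td X Δ τ htd hX _ ih =>
    intro Γ' hΓ
    exact .xtor _ td X Δ τ htd hX (ih _ fun y e he hy => hΓ y (.xtor y X τ e he hy))
  | fn Γ td f τ htd hf _ ih =>
    intro Γ' hΓ
    exact .fn _ td f τ htd hf (ih _ fun y e he hy => hΓ y (.xtor y f.name τ e he hy))
  | mtch Γ td cases htd hcases _ ih =>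
    intro Γ' hΓ
    refine .mtch _ td cases htd hcases fun cs hcs => ih cs hcs _ fun y hy => ?_
    exact List.lookup_append_congr fun hfree =>
      hΓ y (.mtch y td.pol td.name cases cs hcs hy hfree)
  | mu Γ o x T c _ ih =>
    intro Γ' hΓ
    refine .mu _ o x T c (ih _ fun y hy => ?_)
    exact List.lookup_append_congr (Δ := [(x, o.flip, T)]) fun hfree =>
      hΓ y (.mu y o x T c hy (hfree _ (List.mem_singleton_self _)))
  | nil Γ Γ' _ => exact .nil _
  | cons Γ σ Δ e x o T _ _ ihσ ihe Γ' hΓ =>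
    exact .cons _ σ Δ e x o T
      (ihσ _ fun y e' he' => hΓ y e' (List.mem_cons_of_mem _ he'))
      (ihe _ fun y => hΓ y e List.mem_cons_self)
  | cut Γ e₁ e₂ T _ _ ih₁ ih₂ Γ' hΓ =>
    exact .cut _ e₁ e₂ T (ih₁ _ fun y hy => hΓ y (.cutl y e₁ e₂ hy))
      (ih₂ _ fun y hy => hΓ y (.cutr y e₁ e₂ hy))
  | done Γ Γ' _ => exact .done _

theorem HasTy.weaken_fresh {P : Program} {Γ : Ctx} {e : Expr} {o : Orientation} {T : TName}
    {k : Var} (b : Orientation × TName) (hk : ¬ FVE k e) (h : HasTy P Γ e o T) :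
    HasTy P ((k, b) :: Γ) e o T :=
  h.congr_ctx _ fun y hy => by
    have hyk : (y == k) = false := beq_false_of_ne fun hyk => hk (hyk ▸ hy)
    simp [List.lookup_cons, hyk]

/-- **Derivability of the shift-embedding rule**: if the shift type declarations for `T`
are present in the program, then for every orientation `o`, strategy `s` and expression
`e`, from `Γ ⊢ e :ᵒ T` one can derive `Γ ⊢ S^o_s(e) :ᵒ ⇕_s T`
(the bound variable `k` of the wrapper being fresh for `e`). -/
theorem shift_embedding_derivable (P : Program) (T upN downN : TName)
    (cbvX cbnX : XName) (x : Var)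
    (hup : upDecl T upN cbvX x ∈ P.decls)
    (hdown : downDecl T downN cbnX x ∈ P.decls)
    (o : Orientation) (s : Strategy) (Γ : Ctx) (e : Expr) (k : Var)
    (hk : ¬ FVE k e)
    (he : HasTy P Γ e o T) :
    HasTy P Γ (wrapShift o s T upN downN cbvX cbnX k e) o (shiftName s upN downN) := by
  have hk_var (o' : Orientation) : HasTy P ((k, o', T) :: Γ) (.var k) o' T :=
    .var _ k o' T List.lookup_cons_self
  have he_weak (o' : Orientation) : HasTy P ((k, o', T) :: Γ) e o T := he.weaken_fresh _ hk
  cases o <;> cases s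
  · exact .xtor Γ _ cbvX _ [e] hup (by simp [upDecl]) (.cons _ _ _ e x _ T (.nil _) he)
  · refine .mtch Γ _ _ hdown (by simp [downDecl, eraseCtx]) ?_
    simpa using CmdTy.cut _ e _ T (he_weak .con) (hk_var .con)
  · refine .mtch Γ _ _ hup (by simp [upDecl, eraseCtx]) ?_
    simpa using CmdTy.cut _ _ e T (hk_var .prd) (he_weak .prd)
  · exact .xtor Γ _ cbnX _ [e] hdown (by simp [downDecl]) (.cons _ _ _ e x _ T (.nil _) he)

end SymCalc
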